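/- For i ≤ d, two d-simplices of M_d are isomorphic in Fc_{W_d}(M) if and only if they are isomorphic in Fc_{W_i}(M); in particular, the isomorphism classes of d-simplices of M_d are the same computed in Fc_{W_d}(M) or in Fc_{W_0}(M). -/

import Mathlib

open CategoryTheory

structure Bisheaf (M : Type) [PartialOrder M] where
  shf : M ⥤ AddCommGrpCat
  csh : Mᵒᵖ ⥤ AddCommGrpCat
  F : ∀ σ : M, shf.obj σ ⟶ csh.obj (Opposite.op σ)
  compat : ∀ {σ τ : M} (h : σ ≤ τ),
    shf.map (homOfLE h) ≫ F τ ≫ csh.map (homOfLE h).op = F σ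

variable {M : Type} [PartialOrder M]

/-- The set `E` of face relations to which the bisheaf assigns isomorphisms. -/
def Bisheaf.E (B : Bisheaf M) (σ τ : M) : Prop :=
  ∃ h : σ ≤ τ, IsIso (B.shf.map (homOfLE h)) ∧ IsIso (B.csh.map (homOfLE h).op)

/-- The collection `W = {(σ ≤ τ) ∈ E | σ ∈ U}`, where
`U = {σ | (σ ≤ ρ) ∈ E for every ρ in the open star of σ}`. -/
def Bisheaf.W (B : Bisheaf M) (σ τ : M) : Prop :=
  σ ≤ τ ∧ ∀ ρ, σ ≤ ρ → B.E σ ρ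

/-- A relation on a poset, viewed as a morphism property on the face-poset category. -/
def mp (W : M → M → Prop) : MorphismProperty M := fun σ τ _ => W σ τ

/-- Two simplices are isomorphic in the localization `Fc_W(M)` of the face poset. -/
def isoIn (W : M → M → Prop) (σ τ : M) : Prop :=
  Nonempty ((mp W).Q.obj σ ≅ (mp W).Q.obj τ)

/-- `U` relative to a subcomplex `A`: simplices of `A` all of whose face relations
within the open star in `A` lie in `E`. -/
def Uof (E : M → M → Prop) (A : Set M) : Set M :=
  {σ | σ ∈ A ∧ ∀ τ ∈ A, σ ≤ τ → E σ τ}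

/-- Enlarge a collection of face relations by all relations out of members of
`Uof E A` into the open star within `A`. -/
def Wadd (E : M → M → Prop) (A : Set M) (Wp : M → M → Prop) : M → M → Prop :=
  fun σ τ => Wp σ τ ∨ (σ ∈ Uof E A ∧ τ ∈ A ∧ σ ≤ τ)

/-- One step of the iterative construction: delete from `P.1` all simplices
isomorphic in the localization about `P.2` to a `(d+1)`-dimensional simplex. -/
def stepM (dim : M → ℕ) (P : Set M × (M → M → Prop)) (d : ℕ) : Set M :=
  {σ | σ ∈ P.1 ∧ ¬ ∃ τ : M, dim τ = d + 1 ∧ isoIn P.2 σ τ}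

/-- One step `(M_{d+1}, W_{d+1}) ↦ (M_d, W_d)` of the iterative construction. -/
def step (E : M → M → Prop) (dim : M → ℕ) (P : Set M × (M → M → Prop)) (d : ℕ) :
    Set M × (M → M → Prop) :=
  (stepM dim P d, Wadd E (stepM dim P d) P.2)

/-- The iterative construction, indexed by the number `j` of steps performed:
`seq E dim m j = (M_{m-j}, W_{m-j})`, starting from `(M_m, W_m) = (M, W)`. -/
def seq (E : M → M → Prop) (dim : M → ℕ) (m : ℕ) : ℕ → Set M × (M → M → Prop)
  | 0 => (Set.univ, Wadd E Set.univ (fun _ _ => False))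
  | j + 1 => step E dim (seq E dim m j) (m - (j + 1))

/-- The subcomplex `M_d` of the iterative construction. -/
def Mseq (B : Bisheaf M) (dim : M → ℕ) (m d : ℕ) : Set M := (seq B.E dim m (m - d)).1

/-- The collection `W_d` of face relations of the iterative construction. -/
def Wseq (B : Bisheaf M) (dim : M → ℕ) (m d : ℕ) : M → M → Prop := (seq B.E dim m (m - d)).2

/-!
An isomorphism in a localization of the face poset yields a zigzag from `τ` to `τ'` that goes up
along face relations and down along inverted arrows. Every arrow of `W_i` was added at some stage
`e ≥ i` of the construction, out of a simplex of `U(M_e)`. Following a `W_i`-zigzag out of the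
`d`-simplex `τ` inside `M_d`, one shows that every coface in `M_d` of the current vertex is
`W_d`-isomorphic to `τ`: arrows added at a stage `e ≥ d` already lie in `W_d`, while an arrow added
at a stage `e < d` would, by saturation of `M_e` under `W_d`-isomorphisms, put `τ` into `M_e`,
where all simplices have dimension at most `e`. The same argument shows that each `M_d` is a
subcomplex, which is needed to keep the zigzag inside `M_d`.
-/

section Localization

variable {W W' : M → M → Prop} {σ τ ρ : M}

lemma isoIn_refl (W : M → M → Prop) (σ : M) : isoIn W σ σ := ⟨Iso.refl _⟩

lemma isoIn_symm (h : isoIn W σ τ) : isoIn W τ σ := ⟨h.some.symm⟩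

lemma isoIn_trans (h : isoIn W σ τ) (h' : isoIn W τ ρ) : isoIn W σ ρ := ⟨h.some.trans h'.some⟩

lemma isoIn_map {D : Type*} [Category D] (F : M ⥤ D) (hF : (mp W).IsInvertedBy F)
    (h : isoIn W σ τ) : Nonempty (F.obj σ ≅ F.obj τ) := by
  obtain ⟨e⟩ := h
  have hfac := Localization.Construction.fac F hF
  exact ⟨eqToIso (Functor.congr_obj hfac σ).symm ≪≫
    (Localization.Construction.lift F hF).mapIso e ≪≫ eqToIso (Functor.congr_obj hfac τ)⟩

lemma isoIn_of_le (hle : σ ≤ τ) (hW : W σ τ) : isoIn W σ τ :=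
  have : IsIso ((mp W).Q.map (homOfLE hle)) := (mp W).Q_inverts _ hW
  ⟨asIso ((mp W).Q.map (homOfLE hle))⟩

lemma isoIn_mono (h : ∀ a b, W a b → W' a b) (hi : isoIn W σ τ) : isoIn W' σ τ :=
  isoIn_map (mp W').Q (fun _ _ f hf => (mp W').Q_inverts f (h _ _ hf)) hi

def Reach (W : M → M → Prop) : M → M → Prop :=
  Relation.ReflTransGen fun a b => a ≤ b ∨ W b a

def ReachOrder (_ : M → M → Prop) : Type := M

instance (W : M → M → Prop) : Preorder (ReachOrder W) where
  le a b := Reach W a b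
  le_refl _ := Relation.ReflTransGen.refl
  le_trans _ _ _ := Relation.ReflTransGen.trans

def toReachOrder (W : M → M → Prop) : M ⥤ ReachOrder W :=
  Monotone.functor (f := fun x => (x : ReachOrder W))
    fun _ _ h => (Relation.ReflTransGen.single (Or.inl h) : Reach W _ _)

lemma reach_of_isoIn (h : isoIn W σ τ) : Reach W σ τ := by
  have hinv : (mp W).IsInvertedBy (toReachOrder W) := fun a b _ hf =>
    ⟨⟨homOfLE (Relation.ReflTransGen.single (Or.inr hf) : Reach W b a),
      Subsingleton.elim _ _, Subsingleton.elim _ _⟩⟩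
  obtain ⟨e⟩ := isoIn_map (toReachOrder W) hinv h
  exact (leOfHom e.hom : Reach W σ τ)

end Localization

section Construction

variable {B : Bisheaf M} {dim : M → ℕ} {m : ℕ} {d e i k : ℕ}
  {σ τ ρ x y : M}

/-- The face relations added to `W_{e+1}` to form `W_e`. -/
def AddedAt (B : Bisheaf M) (dim : M → ℕ) (m e : ℕ) (σ ρ : M) : Prop :=
  σ ∈ Uof B.E (Mseq B dim m e) ∧ ρ ∈ Mseq B dim m e ∧ σ ≤ ρ

lemma Mseq_eq_univ (hd : m ≤ d) : Mseq B dim m d = Set.univ := by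
  rw [Mseq, Nat.sub_eq_zero_of_le hd]
  rfl

lemma Wseq_eq_base (hd : m ≤ d) : Wseq B dim m d = Wadd B.E Set.univ fun _ _ => False := by
  rw [Wseq, Nat.sub_eq_zero_of_le hd]
  rfl

lemma seq_sub_eq_step (hd : d < m) :
    seq B.E dim m (m - d) = step B.E dim (seq B.E dim m (m - (d + 1))) d := by
  rw [show m - d = m - (d + 1) + 1 by omega, seq, show m - (m - (d + 1) + 1) = d by omega]

lemma mem_Mseq_iff (hd : d < m) :
    x ∈ Mseq B dim m d ↔ x ∈ Mseq B dim m (d + 1) ∧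
      ¬ ∃ τ, dim τ = d + 1 ∧ isoIn (Wseq B dim m (d + 1)) x τ := by
  rw [Mseq, seq_sub_eq_step hd]
  rfl

lemma Wseq_iff_of_lt (hd : d < m) :
    Wseq B dim m d σ ρ ↔ Wseq B dim m (d + 1) σ ρ ∨ AddedAt B dim m d σ ρ := by
  rw [Wseq, AddedAt, Mseq, seq_sub_eq_step hd]
  rfl

lemma Wseq_self_iff : Wseq B dim m m σ ρ ↔ AddedAt B dim m m σ ρ := by
  rw [Wseq_eq_base le_rfl, AddedAt, Mseq_eq_univ le_rfl]
  simp [Wadd, Uof]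

lemma Mseq_subset_succ (d : ℕ) : Mseq B dim m d ⊆ Mseq B dim m (d + 1) := by
  rcases lt_or_ge d m with hd | hd
  · exact fun _ hx => ((mem_Mseq_iff hd).1 hx).1
  · rw [Mseq_eq_univ hd, Mseq_eq_univ (hd.trans d.le_succ)]

lemma Mseq_mono (h : d ≤ e) : Mseq B dim m d ⊆ Mseq B dim m e := by
  induction e, h using Nat.le_induction with
  | base => exact subset_rfl
  | succ n _ ih => exact ih.trans (Mseq_subset_succ n)

lemma Wseq_iff (hd : d ≤ m) :
    Wseq B dim m d σ ρ ↔ ∃ e, d ≤ e ∧ e ≤ m ∧ AddedAt B dim m e σ ρ := by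
  induction hd using Nat.decreasingInduction with
  | self =>
    rw [Wseq_self_iff]
    exact ⟨fun h => ⟨m, le_rfl, le_rfl, h⟩, fun ⟨e, hme, hem, h⟩ => le_antisymm hem hme ▸ h⟩
  | of_succ d hd ih =>
    rw [Wseq_iff_of_lt hd, ih]
    constructor
    · rintro (⟨e, hde, hem, h⟩ | h)
      exacts [⟨e, by omega, hem, h⟩, ⟨d, le_rfl, hd.le, h⟩]
    · rintro ⟨e, hde, hem, h⟩
      rcases hde.eq_or_lt with rfl | hlt
      exacts [Or.inr h, Or.inl ⟨e, hlt, hem, h⟩]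

lemma Wseq_of_addedAt (hde : d ≤ e) (hem : e ≤ m) (h : AddedAt B dim m e σ ρ) :
    Wseq B dim m d σ ρ :=
  (Wseq_iff (hde.trans hem)).2 ⟨e, hde, hem, h⟩

lemma Wseq_anti (hde : d ≤ e) (hem : e ≤ m) (h : Wseq B dim m e σ ρ) : Wseq B dim m d σ ρ :=
  let ⟨_, hee', he'm, h'⟩ := (Wseq_iff hem).1 h
  Wseq_of_addedAt (hde.trans hee') he'm h'

lemma dim_le_of_mem_Mseq (hbound : ∀ σ, dim σ ≤ m) (hx : x ∈ Mseq B dim m d) : dim x ≤ d := by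
  by_contra! h
  have hlt : dim x - 1 < m := by have := hbound x; omega
  have hx' := (mem_Mseq_iff hlt).1 (Mseq_mono (by omega : d ≤ dim x - 1) hx)
  exact hx'.2 ⟨x, by omega, isoIn_refl _ x⟩

/-- Saturation: `M_k` is a union of isomorphism classes of `Fc_{W_e}(M)` restricted to `M_e`. -/
lemma mem_Mseq_congr (hem : e ≤ m) (hke : k ≤ e) (hσ : σ ∈ Mseq B dim m e)
    (hρ : ρ ∈ Mseq B dim m e) (h : isoIn (Wseq B dim m e) σ ρ) :
    σ ∈ Mseq B dim m k ↔ ρ ∈ Mseq B dim m k := by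
  induction hke using Nat.decreasingInduction with
  | self => exact iff_of_true hσ hρ
  | of_succ k hk ih =>
    have hiso : isoIn (Wseq B dim m (k + 1)) σ ρ := isoIn_mono (fun _ _ => Wseq_anti hk hem) h
    rw [mem_Mseq_iff (hk.trans_le hem), mem_Mseq_iff (hk.trans_le hem), ih]
    exact and_congr_right' <| not_congr <| exists_congr fun _ => and_congr_right'
      ⟨isoIn_trans (isoIn_symm hiso), isoIn_trans hiso⟩

lemma mem_Mseq_of_step (hid : i ≤ d) (hdm : d ≤ m) (hdc : IsLowerSet (Mseq B dim m d))
    (hstep : x ≤ y ∨ Wseq B dim m i y x) (hy : y ∈ Mseq B dim m d) : x ∈ Mseq B dim m d := by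
  rcases hstep with hxy | hW
  · exact hdc hxy hy
  obtain ⟨e, -, hem, hyU, hxe, hyx⟩ := (Wseq_iff (hid.trans hdm)).1 hW
  rcases le_or_gt d e with hde | hed
  · exact (mem_Mseq_congr hem hde hyU.1 hxe
      (isoIn_of_le hyx (Wseq_of_addedAt le_rfl hem ⟨hyU, hxe, hyx⟩))).1 hy
  · exact Mseq_mono hed.le hxe

/-- No morphism of `Fc_{W_i}(M)` leads from `M - M_d` into `M_d`. -/
lemma mem_Mseq_of_reach (hid : i ≤ d) (hdm : d ≤ m) (hdc : IsLowerSet (Mseq B dim m d))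
    (h : Reach (Wseq B dim m i) x y) (hy : y ∈ Mseq B dim m d) : x ∈ Mseq B dim m d := by
  induction h using Relation.ReflTransGen.head_induction_on with
  | refl => exact hy
  | head hstep _ ih => exact mem_Mseq_of_step hid hdm hdc hstep ih

lemma isoIn_of_reach (hstrict : ∀ σ τ : M, σ < τ → dim σ < dim τ) (hbound : ∀ σ, dim σ ≤ m)
    (hid : i ≤ d) (hdc : IsLowerSet (Mseq B dim m d)) (hτ : τ ∈ Mseq B dim m d)
    (hdτ : dim τ = d) (h : Reach (Wseq B dim m i) τ y) :
    ∀ z ∈ Mseq B dim m d, y ≤ z → isoIn (Wseq B dim m d) z τ := by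
  have hdm : d ≤ m := hdτ ▸ hbound τ
  induction h with
  | refl =>
    intro z hz hτz
    obtain rfl : τ = z := hτz.eq_of_not_lt fun hlt =>
      (hstrict _ _ hlt).not_ge (hdτ ▸ dim_le_of_mem_Mseq hbound hz)
    exact isoIn_refl _ τ
  | @tail b c _ hstep ih =>
    rcases hstep with hbc | hW
    · exact fun z hz hcz => ih z hz (hbc.trans hcz)
    intro z hz hcz
    have hb : b ∈ Mseq B dim m d := mem_Mseq_of_step hid hdm hdc (Or.inr hW) (hdc hcz hz)
    have hbτ := ih b hb le_rfl
    obtain ⟨e, -, hem, hcU, hbe, hcb⟩ := (Wseq_iff (hid.trans hdm)).1 hW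
    rcases le_or_gt d e with hde | hed
    · have hcz' := Wseq_of_addedAt hde hem ⟨hcU, Mseq_mono hde hz, hcz⟩
      have hcb' := Wseq_of_addedAt hde hem ⟨hcU, hbe, hcb⟩
      exact isoIn_trans (isoIn_symm (isoIn_of_le hcz hcz'))
        (isoIn_trans (isoIn_of_le hcb hcb') hbτ)
    · -- an arrow added before stage `d` would force the `d`-simplex `τ` into `M_e`
      have hτe := (mem_Mseq_congr hdm hed.le hb hτ hbτ).1 hbe
      exact absurd (dim_le_of_mem_Mseq hbound hτe) (by omega)

lemma isLowerSet_Mseq (hstrict : ∀ σ τ : M, σ < τ → dim σ < dim τ) (hbound : ∀ σ, dim σ ≤ m)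
    (hdm : d ≤ m) : IsLowerSet (Mseq B dim m d) := by
  induction hdm using Nat.decreasingInduction with
  | self => exact Mseq_eq_univ (B := B) (dim := dim) le_rfl ▸ isLowerSet_univ
  | of_succ d hd ih =>
    intro z x hxz hz
    have hz' := (mem_Mseq_iff hd).1 hz
    refine (mem_Mseq_iff hd).2 ⟨ih hxz hz'.1, fun ⟨ρ, hρ, hxρ⟩ => hz'.2 ⟨ρ, hρ, ?_⟩⟩
    have hreach := reach_of_isoIn (isoIn_symm hxρ)
    have hρM := mem_Mseq_of_reach le_rfl hd ih hreach (ih hxz hz'.1)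
    exact isoIn_of_reach hstrict hbound le_rfl ih hρM hρ hreach z hz'.1 hxz

end Construction

theorem iso_classes_stable_general (B : Bisheaf M) (dim : M → ℕ) (m : ℕ)
    (hstrict : ∀ σ τ : M, σ < τ → dim σ < dim τ)
    (hbound : ∀ σ : M, dim σ ≤ m)
    (i d : ℕ) (hid : i ≤ d)
    {τ τ' : M} (hτ : τ ∈ Mseq B dim m d) (hτ' : τ' ∈ Mseq B dim m d)
    (hdτ : dim τ = d) :
    isoIn (Wseq B dim m d) τ τ' ↔ isoIn (Wseq B dim m i) τ τ' := by
  have hdm : d ≤ m := hdτ ▸ hbound τ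
  refine ⟨isoIn_mono fun _ _ => Wseq_anti hid hdm, fun h => ?_⟩
  have hdc := isLowerSet_Mseq (B := B) hstrict hbound hdm
  exact isoIn_symm (isoIn_of_reach hstrict hbound hid hdc hτ hdτ (reach_of_isoIn h) τ' hτ' le_rfl)

/-- for `i ≤ d`, two `d`-dimensional simplices of `M_d` are isomorphic
in `Fc_{W_d}(M)` if and only if they are isomorphic in `Fc_{W_i}(M)`; in particular
(taking `i = 0`) the isomorphism classes of `d`-simplices of `M_d` are the same
computed in `Fc_{W_d}(M)` or in `Fc_{W_0}(M)`. -/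
theorem iso_classes_stable (B : Bisheaf M) (dim : M → ℕ) (m : ℕ)
    (hstrict : ∀ σ τ : M, σ < τ → dim σ < dim τ)
    (hbound : ∀ σ : M, dim σ ≤ m)
    (i d : ℕ) (hid : i ≤ d) (hdm : d ≤ m)
    {τ τ' : M} (hτ : τ ∈ Mseq B dim m d) (hτ' : τ' ∈ Mseq B dim m d)
    (hdτ : dim τ = d) (hdτ' : dim τ' = d) :
    isoIn (Wseq B dim m d) τ τ' ↔ isoIn (Wseq B dim m i) τ τ' :=
  iso_classes_stable_general B dim m hstrict hbound i d hid hτ hτ' hdτ
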